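/- arXiv:2309.05077 — 2 statements merged into one kernel-verified Lean document; each statement's English description precedes it below -/
import Mathlib

section
/- For the Adam optimizer update, each coordinate satisfies |w_{t+1,l} − w_{t,l}| ≤ η_t (1 − β₁) / (√(1 − β₂) · √(1 − β₁²/β₂)), provided 0 ≤ β₁² < β₂ < 1. -/
open Finset

/-- Coordinatewise bounded-update property of Adam:
`|w_{t+1,l} - w_{t,l}| ≤ η_t (1-β₁) / (√(1-β₂)·√(1-β₁²/β₂))`. -/
theorem adam_bounded_update
    (β₁ β₂ : ℝ) (hβ₁ : 0 ≤ β₁) (hβ : β₁ ^ 2 < β₂) (hβ₂ : β₂ < 1)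
    (η : ℕ → ℝ) (hη : ∀ t, 0 ≤ η t)
    (g m v w : ℕ → ℝ)
    (hm0 : m 0 = 0) (hv0 : v 0 = 0)
    (hm : ∀ t, m (t + 1) = β₁ * m t + (1 - β₁) * g (t + 1))
    (hv : ∀ t, v (t + 1) = β₂ * v t + (1 - β₂) * (g (t + 1)) ^ 2)
    (hw : ∀ t, 1 ≤ t → w (t + 1) = w t - η t * (m t / Real.sqrt (v t)))
    (t : ℕ) (ht : 1 ≤ t) (hvt : 0 < v t) :
    |w (t + 1) - w t| ≤
      η t * (1 - β₁) / (Real.sqrt (1 - β₂) * Real.sqrt (1 - β₁ ^ 2 / β₂)) := by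
  have hβ₂0 : 0 < β₂ := lt_of_le_of_lt (sq_nonneg β₁) hβ
  have hA : 0 < 1 - β₁ ^ 2 / β₂ := by
    rw [sub_pos, div_lt_one hβ₂0]; exact hβ
  have h1β₂ : 0 < 1 - β₂ := by linarith
  have h1β₁ : 0 ≤ 1 - β₁ := by nlinarith [sq_nonneg (β₁ - 1)]
  have hd : 0 < β₂ - β₁ ^ 2 := by linarith
  have eA : 1 - β₁ ^ 2 / β₂ = (β₂ - β₁ ^ 2) / β₂ := by field_simp
  have key : ∀ s, (1 - β₁ ^ 2 / β₂) * (1 - β₂) * m s ^ 2 ≤ (1 - β₁) ^ 2 * v s := by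
    intro s
    induction s with
    | zero => simp [hm0, hv0]
    | succ n ih =>
      rw [hm n, hv n, eA] at *
      rw [div_mul_eq_mul_div, div_mul_eq_mul_div, div_le_iff₀ hβ₂0] at ih ⊢
      nlinarith [sq_nonneg ((β₂ - β₁ ^ 2) * m n - β₁ * (1 - β₁) * g (n + 1)),
        mul_nonneg h1β₂.le (sq_nonneg ((β₂ - β₁ ^ 2) * m n - β₁ * (1 - β₁) * g (n + 1))),
        sq_nonneg (g (n + 1)), mul_pos hd h1β₂]
  have hsv : 0 < Real.sqrt (v t) := Real.sqrt_pos.mpr hvt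
  have hsq : Real.sqrt ((1 - β₁ ^ 2 / β₂) * (1 - β₂) * m t ^ 2)
      ≤ Real.sqrt ((1 - β₁) ^ 2 * v t) := Real.sqrt_le_sqrt (key t)
  rw [Real.sqrt_mul (by positivity), Real.sqrt_mul hA.le, Real.sqrt_sq_eq_abs,
    Real.sqrt_mul (sq_nonneg _), Real.sqrt_sq h1β₁] at hsq
  have heq : w (t + 1) - w t = -(η t * (m t / Real.sqrt (v t))) := by
    rw [hw t ht]; ring
  rw [heq, abs_neg, abs_mul, abs_of_nonneg (hη t), abs_div,
    abs_of_nonneg (Real.sqrt_nonneg _), mul_div_assoc]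
  apply mul_le_mul_of_nonneg_left _ (hη t)
  rw [div_le_div_iff₀ hsv (mul_pos (Real.sqrt_pos.mpr h1β₂) (Real.sqrt_pos.mpr hA))]
  nlinarith [hsq, Real.sqrt_nonneg (1 - β₁ ^ 2 / β₂), Real.sqrt_nonneg (1 - β₂),
    abs_nonneg (m t)]
end

section
/- Suppose β₂ ∈ (0,1), β₁ ∈ [0,1) and β₁² < β₂. For any sequence of reals g₁,…,g_t not all zero, the Adam-style ratio satisfies ((1−β₁)∑_{i=0}^{t−1} β₁^i |g_{t−i}|) / √((1−β₂)∑_{i=0}^{t−1} β₂^i g_{t−i}²) ≤ (1−β₁)/(√(1−β₂)·√(1−β₁²/β₂)). -/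
open Finset

/-- Core inequality behind Adam's bounded update: the ratio of the exponential
moving averages is bounded by `(1-β₁)/(√(1-β₂)·√(1-β₁²/β₂))`. -/
theorem adam_ratio_bound
    (β₁ β₂ : ℝ) (hβ₁₀ : 0 ≤ β₁) (hβ₁ : β₁ < 1) (hβ₂₀ : 0 < β₂) (hβ₂ : β₂ < 1)
    (hβ : β₁ ^ 2 < β₂)
    (g : ℕ → ℝ) (t : ℕ) (ht : 1 ≤ t)
    (hg : ∃ i ∈ range t, g (t - i) ≠ 0) :
    ((1 - β₁) * ∑ i ∈ range t, β₁ ^ i * |g (t - i)|) /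
        Real.sqrt ((1 - β₂) * ∑ i ∈ range t, β₂ ^ i * (g (t - i)) ^ 2) ≤
      (1 - β₁) / (Real.sqrt (1 - β₂) * Real.sqrt (1 - β₁ ^ 2 / β₂)) := by
  set A := ∑ i ∈ range t, β₁ ^ i * |g (t - i)| with hA
  set S := ∑ i ∈ range t, β₂ ^ i * (g (t - i)) ^ 2 with hS
  set c := β₁ ^ 2 / β₂ with hc
  have hc0 : 0 ≤ c := by positivity
  have hc1 : c < 1 := (div_lt_one hβ₂₀).mpr hβ
  have h1c : 0 < 1 - c := by linarith
  obtain ⟨i₀, hi₀, hgi₀⟩ := hg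
  have hSpos : 0 < S := by
    apply Finset.sum_pos' (fun i _ => by positivity)
    exact ⟨i₀, hi₀, by positivity⟩
  have hApos : 0 ≤ A := Finset.sum_nonneg fun i _ => by positivity
  have hsqβ₂ : 0 < Real.sqrt β₂ := Real.sqrt_pos.mpr hβ₂₀
  have hCS : A ^ 2 ≤ S * ∑ i ∈ range t, c ^ i := by
    have key := Finset.sum_mul_sq_le_sq_mul_sq (range t)
      (fun i => Real.sqrt β₂ ^ i * |g (t - i)|) (fun i => (β₁ / Real.sqrt β₂) ^ i)
    have e1 : ∀ i ∈ range t,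
        (Real.sqrt β₂ ^ i * |g (t - i)|) * (β₁ / Real.sqrt β₂) ^ i
          = β₁ ^ i * |g (t - i)| := by
      intro i _
      rw [div_pow]
      field_simp
    have e2 : ∀ i ∈ range t,
        (Real.sqrt β₂ ^ i * |g (t - i)|) ^ 2 = β₂ ^ i * (g (t - i)) ^ 2 := by
      intro i _
      rw [mul_pow, ← pow_mul, mul_comm i 2, pow_mul, Real.sq_sqrt hβ₂₀.le, sq_abs]
    have e3 : ∀ i ∈ range t, ((β₁ / Real.sqrt β₂) ^ i) ^ 2 = c ^ i := by
      intro i _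
      rw [← pow_mul, mul_comm i 2, pow_mul, div_pow, Real.sq_sqrt hβ₂₀.le]
    rw [Finset.sum_congr rfl e1, Finset.sum_congr rfl e2, Finset.sum_congr rfl e3] at key
    exact key
  have hgeom : ∑ i ∈ range t, c ^ i ≤ 1 / (1 - c) := by
    rw [geom_sum_eq hc1.ne t,
      show (c ^ t - 1) / (c - 1) = (1 - c ^ t) / (1 - c) by
        rw [← neg_div_neg_eq]; ring_nf,
      div_le_div_iff₀ h1c h1c]
    have hct : 0 ≤ c ^ t := by positivity
    nlinarith
  have hA2 : A ^ 2 * (1 - c) ≤ S := by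
    have := hCS.trans (mul_le_mul_of_nonneg_left hgeom hSpos.le)
    rw [mul_one_div] at this
    calc A ^ 2 * (1 - c) ≤ S / (1 - c) * (1 - c) := by
          exact mul_le_mul_of_nonneg_right this h1c.le
      _ = S := by field_simp
  have hkey : A * Real.sqrt (1 - c) ≤ Real.sqrt S := by
    have : A * Real.sqrt (1 - c) = Real.sqrt (A ^ 2 * (1 - c)) := by
      rw [Real.sqrt_mul (by positivity), Real.sqrt_sq hApos]
    rw [this]
    exact Real.sqrt_le_sqrt hA2
  have h1β₂ : 0 < 1 - β₂ := by linarith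
  rw [Real.sqrt_mul h1β₂.le]
  have hden1 : 0 < Real.sqrt (1 - β₂) * Real.sqrt S := by positivity
  have hden2 : 0 < Real.sqrt (1 - β₂) * Real.sqrt (1 - c) := by positivity
  rw [div_le_div_iff₀ hden1 hden2]
  have h1β₁ : 0 ≤ 1 - β₁ := by linarith
  calc (1 - β₁) * A * (Real.sqrt (1 - β₂) * Real.sqrt (1 - c))
      = (1 - β₁) * Real.sqrt (1 - β₂) * (A * Real.sqrt (1 - c)) := by ring
    _ ≤ (1 - β₁) * Real.sqrt (1 - β₂) * Real.sqrt S := by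
        exact mul_le_mul_of_nonneg_left hkey (by positivity)
    _ = (1 - β₁) * (Real.sqrt (1 - β₂) * Real.sqrt S) := by ring
end
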